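/- (Theorem 2 of the paper, asymptotic tracking error.) Under the hypotheses of the finite-time tracking bound — Y = ∏_{i=1}^d [l_i, u_i] a nonempty box; (F^k)_{k≥0} differentiable with coordinate-wise quadratic upper bound constant L > 0 on Y; each F^k prox-PL on Y with constant σ ∈ (0, dL) and common attained optimal value F*; sup_{ξ∈Y} |F^k(ξ) − F^{k−1}(ξ)| ≤ e; iterates ξ^{j+1}(ω) given by one coordinate prox-step of F^j per time step along coordinate sequence ω — the expected tracking error satisfies limsup_{k→∞} d^{−k} Σ_{ω ∈ {1,…,d}^k} [ F^k(ξ^k(ω)) − F* ] ≤ e · dL/σ, i.e. limsup of the expected suboptimality is at most e/(1 − q) with q := 1 − σ/(dL). -/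

import Mathlib

/-- Membership in the box `Y = ∏_i [l_i, u_i] ⊂ ℝ^d`. -/
def InBox {d : ℕ} (l u ξ : Fin d → ℝ) : Prop := ∀ i, ξ i ∈ Set.Icc (l i) (u i)

/-- The `i`-th partial derivative `∂_i F` of `F : ℝ^d → ℝ` at `ξ`. -/
noncomputable def pd {d : ℕ} (F : (Fin d → ℝ) → ℝ) (ξ : Fin d → ℝ) (i : Fin d) : ℝ :=
  deriv (fun t : ℝ => F (Function.update ξ i t)) (ξ i)

/-- `F` has a coordinate-wise quadratic upper bound with constant `L` on the box:
`F(ξ + α e_i) ≤ F(ξ) + α ∂_i F(ξ) + (L/2) α²` whenever `ξ` and `ξ + α e_i` lie in the box. -/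
def CoordQuadUB {d : ℕ} (F : (Fin d → ℝ) → ℝ) (L : ℝ) (l u : Fin d → ℝ) : Prop :=
  ∀ ξ, InBox l u ξ → ∀ i : Fin d, ∀ α : ℝ, InBox l u (Function.update ξ i (ξ i + α)) →
    F (Function.update ξ i (ξ i + α)) ≤ F ξ + α * pd F ξ i + L / 2 * α ^ 2

/-- `ξ'` is the coordinate prox-step of `F` at `ξ` in coordinate `i` with step constant `L`:
`ξ' = ξ + α e_i` where `α` minimizes `α ∂_i F(ξ) + (L/2) α²` subject to `ξ_i + α ∈ [l_i, u_i]`. -/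
def IsProxStep {d : ℕ} (F : (Fin d → ℝ) → ℝ) (L : ℝ) (l u ξ : Fin d → ℝ) (i : Fin d)
    (ξ' : Fin d → ℝ) : Prop :=
  ∃ α : ℝ, ξ' = Function.update ξ i (ξ i + α) ∧ ξ i + α ∈ Set.Icc (l i) (u i) ∧
    ∀ β : ℝ, ξ i + β ∈ Set.Icc (l i) (u i) →
      α * pd F ξ i + L / 2 * α ^ 2 ≤ β * pd F ξ i + L / 2 * β ^ 2

/-- The forward-step quantity
`D(ξ, α) = −2α · inf_{ξ' ∈ Y} [⟨∇F(ξ), ξ' − ξ⟩ + (α/2)‖ξ' − ξ‖²]`. -/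
noncomputable def Dfwd {d : ℕ} (F : (Fin d → ℝ) → ℝ) (l u ξ : Fin d → ℝ) (α : ℝ) : ℝ :=
  -2 * α * sInf {v : ℝ | ∃ ξ', InBox l u ξ' ∧
    v = (∑ i, pd F ξ i * (ξ' i - ξ i)) + α / 2 * ∑ i, (ξ' i - ξ i) ^ 2}

/-- The proximal Polyak–Łojasiewicz inequality on the box with constant `σ` and optimal
value `Fstar`: `(1/2) D(ξ, L) ≥ σ (F(ξ) − F*)` for all `ξ` in the box. -/
def ProxPL {d : ℕ} (F : (Fin d → ℝ) → ℝ) (L : ℝ) (l u : Fin d → ℝ) (σ Fstar : ℝ) : Prop :=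
  ∀ ξ, InBox l u ξ → (1 / 2) * Dfwd F l u ξ L ≥ σ * (F ξ - Fstar)


/-!
Averaging one time step over the `d` equally likely coordinates, the separable quadratic
model turns the `d` coordinate prox-steps into one full forward step, so by the prox-PL
inequality the expected suboptimality of `F^k` contracts by `q = 1 - σ / (d L)`; passing from
`F^k` to `F^{k+1}` costs at most `e`. Hence the expected error `g_k` satisfies
`g_{k+1} ≤ q g_k + e`, and iterating gives `g_k ≤ e / (1 - q) + q^k (g_0 - e / (1 - q))`.
-/

open Filter

section Box

variable {d : ℕ} {l u : Fin d → ℝ}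

lemma isCompact_setOf_inBox (l u : Fin d → ℝ) : IsCompact {ξ : Fin d → ℝ | InBox l u ξ} := by
  simpa [InBox, Set.pi] using isCompact_univ_pi fun i => isCompact_Icc (a := l i) (b := u i)

lemma le_of_eq_sInf_inBox {F : (Fin d → ℝ) → ℝ} {Fstar : ℝ} (hF : Continuous F)
    (hstar : Fstar = sInf {v : ℝ | ∃ ξ, InBox l u ξ ∧ v = F ξ}) {ξ : Fin d → ℝ}
    (hξ : InBox l u ξ) : Fstar ≤ F ξ := by
  have hbdd : BddBelow (F '' {ξ | InBox l u ξ}) :=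
    ((isCompact_setOf_inBox l u).image hF).bddBelow
  rw [hstar]
  exact csInf_le (by simpa [Set.image, eq_comm] using hbdd) ⟨ξ, hξ, rfl⟩

lemma inBox_update {ξ : Fin d → ℝ} (hξ : InBox l u ξ) {i : Fin d} {t : ℝ}
    (ht : t ∈ Set.Icc (l i) (u i)) : InBox l u (Function.update ξ i t) := by
  intro j
  rcases eq_or_ne j i with rfl | hj
  · simpa using ht
  · simpa [Function.update_of_ne hj] using hξ j

end Box

section ProxStep

variable {d : ℕ} {F : (Fin d → ℝ) → ℝ} {L : ℝ} {l u ξ ξ' : Fin d → ℝ} {i : Fin d}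

lemma IsProxStep.inBox (h : IsProxStep F L l u ξ i ξ') (hξ : InBox l u ξ) : InBox l u ξ' := by
  obtain ⟨α, rfl, hα, -⟩ := h
  exact inBox_update hξ hα

lemma IsProxStep.le_add (h : IsProxStep F L l u ξ i ξ') (hquad : CoordQuadUB F L l u)
    (hξ : InBox l u ξ) {β : ℝ} (hβ : ξ i + β ∈ Set.Icc (l i) (u i)) :
    F ξ' ≤ F ξ + (β * pd F ξ i + L / 2 * β ^ 2) := by
  obtain ⟨α, rfl, hα, hmin⟩ := h
  linarith [hquad ξ hξ i α (inBox_update hξ hα), hmin β hβ]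

lemma sum_le_of_isProxStep (hL : 0 < L) (hquad : CoordQuadUB F L l u) (hξ : InBox l u ξ)
    {ξ' : Fin d → Fin d → ℝ} (hstep : ∀ i, IsProxStep F L l u ξ i (ξ' i)) :
    ∑ i, F (ξ' i) ≤ d * F ξ - Dfwd F l u ξ L / (2 * L) := by
  have hmodel : ∑ i, F (ξ' i) - d * F ξ ≤ sInf {v : ℝ | ∃ ξ'', InBox l u ξ'' ∧
      v = (∑ i, pd F ξ i * (ξ'' i - ξ i)) + L / 2 * ∑ i, (ξ'' i - ξ i) ^ 2} := by
    refine le_csInf ⟨_, ξ, hξ, rfl⟩ ?_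
    rintro _ ⟨ξ'', hξ'', rfl⟩
    have hle : ∀ i, F (ξ' i) ≤ F ξ + ((ξ'' i - ξ i) * pd F ξ i + L / 2 * (ξ'' i - ξ i) ^ 2) :=
      fun i => (hstep i).le_add hquad hξ (by simpa using hξ'' i)
    calc ∑ i, F (ξ' i) - d * F ξ
        ≤ ∑ i, (F ξ + ((ξ'' i - ξ i) * pd F ξ i + L / 2 * (ξ'' i - ξ i) ^ 2)) - d * F ξ := by
          gcongr with i; exact hle i
      _ = _ := by simp [Finset.sum_add_distrib, Finset.mul_sum, mul_comm]
  rw [Dfwd, show ∀ s : ℝ, -2 * L * s / (2 * L) = -s from fun s => by field_simp]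
  linarith

lemma sum_sub_le_of_isProxStep {G : (Fin d → ℝ) → ℝ} {σ Fstar e : ℝ} (hL : 0 < L)
    (hquad : CoordQuadUB F L l u) (hPL : ProxPL F L l u σ Fstar)
    (hG : ∀ ξ, InBox l u ξ → G ξ ≤ F ξ + e) (hξ : InBox l u ξ)
    {ξ' : Fin d → Fin d → ℝ} (hstep : ∀ i, IsProxStep F L l u ξ i (ξ' i)) :
    ∑ i, (G (ξ' i) - Fstar) ≤ (d - σ / L) * (F ξ - Fstar) + d * e := by
  have hdesc := sum_le_of_isProxStep hL hquad hξ hstep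
  have hPLξ : σ / L * (F ξ - Fstar) ≤ Dfwd F l u ξ L / (2 * L) := by
    rw [div_mul_eq_mul_div, div_le_div_iff₀ hL (by positivity)]
    nlinarith [hPL ξ hξ]
  calc ∑ i, (G (ξ' i) - Fstar) ≤ ∑ i, (F (ξ' i) - Fstar + e) := by
        gcongr with i; linarith [hG _ ((hstep i).inBox hξ)]
    _ = ∑ i, F (ξ' i) - d * Fstar + d * e := by simp [Finset.sum_add_distrib]
    _ ≤ _ := by linarith

end ProxStep

lemma Fin.sum_fun_succ_eq_sum_snoc {α M : Type*} [Fintype α] [AddCommMonoid M] {k : ℕ}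
    (f : (Fin (k + 1) → α) → M) :
    ∑ ω, f ω = ∑ ω : Fin k → α, ∑ a, f (Fin.snoc ω a) := by
  rw [← Fintype.sum_equiv (Fin.snocEquiv fun _ => α) (fun p => f (Fin.snoc p.2 p.1)) f
    fun _ => rfl, Fintype.sum_prod_type, Finset.sum_comm]

lemma avg_sub_succ_le_of_isProxStep {d k : ℕ} (hd : 0 < d) {l u : Fin d → ℝ}
    {F G : (Fin d → ℝ) → ℝ} {L σ Fstar e : ℝ} (hL : 0 < L)
    (hquad : CoordQuadUB F L l u) (hPL : ProxPL F L l u σ Fstar)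
    (hG : ∀ ξ, InBox l u ξ → G ξ ≤ F ξ + e)
    {x : (Fin k → Fin d) → Fin d → ℝ} {y : (Fin (k + 1) → Fin d) → Fin d → ℝ}
    (hx : ∀ ω, InBox l u (x ω))
    (hy : ∀ ω, IsProxStep F L l u (x fun j => ω j.castSucc) (ω (Fin.last k)) (y ω)) :
    1 / (d : ℝ) ^ (k + 1) * ∑ ω, (G (y ω) - Fstar)
      ≤ (1 - σ / (d * L)) * (1 / (d : ℝ) ^ k * ∑ ω, (F (x ω) - Fstar)) + e := by
  have hsum : ∑ ω, (G (y ω) - Fstar)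
      ≤ ∑ ω : Fin k → Fin d, ((d - σ / L) * (F (x ω) - Fstar) + d * e) := by
    rw [Fin.sum_fun_succ_eq_sum_snoc]
    gcongr with ω
    refine sum_sub_le_of_isProxStep hL hquad hPL hG (hx ω) fun i => ?_
    simpa using hy (Fin.snoc ω i)
  have hd' : (0 : ℝ) < d := by exact_mod_cast hd
  rw [Finset.sum_add_distrib, ← Finset.mul_sum, Finset.sum_const, Finset.card_univ,
    Fintype.card_fun, Fintype.card_fin, Fintype.card_fin, nsmul_eq_mul] at hsum
  calc 1 / (d : ℝ) ^ (k + 1) * ∑ ω, (G (y ω) - Fstar)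
      ≤ 1 / (d : ℝ) ^ (k + 1) *
          ((d - σ / L) * ∑ ω : Fin k → Fin d, (F (x ω) - Fstar) + (d ^ k : ℕ) * (d * e)) := by
        gcongr
    _ = _ := by
        push_cast
        field_simp
        ring

lemma limsup_le_div_of_le_mul_add {g : ℕ → ℝ} {q e : ℝ} (hg : BddBelow (Set.range g))
    (hq0 : 0 ≤ q) (hq1 : q < 1) (hrec : ∀ k, g (k + 1) ≤ q * g k + e) :
    limsup g atTop ≤ e / (1 - q) := by
  set C := e / (1 - q)
  have hC : q * C + e = C := by
    simp only [C]
    field_simp [(sub_pos.2 hq1).ne']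
    ring
  have hbound : ∀ k, g k ≤ C + q ^ k * (g 0 - C) := by
    intro k
    induction k with
    | zero => simp
    | succ k ih =>
      calc g (k + 1) ≤ q * (C + q ^ k * (g 0 - C)) + e := by
            linarith [hrec k, mul_le_mul_of_nonneg_left ih hq0]
        _ = C + q ^ (k + 1) * (g 0 - C) := by linear_combination hC
  have htend : Tendsto (fun k => C + q ^ k * (g 0 - C)) atTop (nhds C) := by
    simpa using ((tendsto_pow_atTop_nhds_zero_of_lt_one hq0 hq1).mul_const (g 0 - C)).const_add C
  calc limsup g atTop ≤ limsup (fun k => C + q ^ k * (g 0 - C)) atTop :=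
        limsup_le_limsup (.of_forall hbound) hg.isBoundedUnder_of_range.isCoboundedUnder_flip
          htend.isBoundedUnder_le
    _ = C := htend.limsup_eq

theorem stmt9_general {d : ℕ} (hd : 0 < d) (l u : Fin d → ℝ)
    (Fk : ℕ → (Fin d → ℝ) → ℝ) (hdiff : ∀ k, Differentiable ℝ (Fk k))
    (L σ Fstar e : ℝ) (hL : 0 < L) (hσ : 0 < σ) (hσ' : σ < d * L)
    (hquad : ∀ k, CoordQuadUB (Fk k) L l u)
    (hstar : ∀ k, Fstar = sInf {v : ℝ | ∃ ξ, InBox l u ξ ∧ v = Fk k ξ})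
    (hPL : ∀ k, ProxPL (Fk k) L l u σ Fstar)
    (hvar : ∀ k : ℕ, 1 ≤ k → ∀ ξ, InBox l u ξ → |Fk k ξ - Fk (k - 1) ξ| ≤ e)
    (ξ0 : Fin d → ℝ) (hξ0 : InBox l u ξ0)
    (Ξ : (k : ℕ) → (Fin k → Fin d) → (Fin d → ℝ))
    (hinit : ∀ ω : Fin 0 → Fin d, Ξ 0 ω = ξ0)
    (hstep : ∀ k : ℕ, ∀ ω : Fin (k + 1) → Fin d,
      IsProxStep (Fk k) L l u (Ξ k (fun j => ω j.castSucc)) (ω (Fin.last k)) (Ξ (k + 1) ω)) :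
    Filter.limsup
        (fun k : ℕ => (1 / (d : ℝ) ^ k) * ∑ ω : Fin k → Fin d, (Fk k (Ξ k ω) - Fstar))
        Filter.atTop ≤ e * (d * L) / σ := by
  have hdL : 0 < d * L := hσ.trans hσ'
  have hbox : ∀ k ω, InBox l u (Ξ k ω) := by
    intro k
    induction k with
    | zero => intro ω; rwa [hinit ω]
    | succ k ih => intro ω; exact (hstep k ω).inBox (ih _)
  have hgap_nonneg : ∀ k, 0 ≤ (1 / (d : ℝ) ^ k) * ∑ ω : Fin k → Fin d, (Fk k (Ξ k ω) - Fstar) :=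
    fun k => mul_nonneg (by positivity) <| Finset.sum_nonneg fun ω _ =>
      sub_nonneg.2 <| le_of_eq_sInf_inBox (hdiff k).continuous (hstar k) (hbox k ω)
  have hdrift : ∀ k ξ, InBox l u ξ → Fk (k + 1) ξ ≤ Fk k ξ + e := fun k ξ hξ => by
    have := (abs_le.1 (hvar (k + 1) k.succ_pos ξ hξ)).2
    rw [Nat.add_sub_cancel] at this
    linarith
  calc _ ≤ e / (1 - (1 - σ / (d * L))) :=
        limsup_le_div_of_le_mul_add ⟨0, Set.forall_mem_range.2 hgap_nonneg⟩
          (by rw [sub_nonneg, div_le_one hdL]; exact hσ'.le) (by linarith [div_pos hσ hdL])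
          fun k => avg_sub_succ_le_of_isProxStep hd hL (hquad k) (hPL k) (hdrift k)
            (hbox k) (hstep k)
    _ = e * (d * L) / σ := by rw [sub_sub_cancel, div_div_eq_mul_div]

/-- Theorem 2 of the paper, asymptotic tracking error: under the hypotheses
of the finite-time tracking bound, the expected tracking error satisfies
`limsup_{k→∞} d^{−k} Σ_ω [F^k(ξ^k(ω)) − F*] ≤ e · dL/σ = e/(1 − q)`. -/
theorem stmt9 {d : ℕ} (hd : 0 < d) (l u : Fin d → ℝ) (hlu : ∀ i, l i ≤ u i)
    (Fk : ℕ → (Fin d → ℝ) → ℝ) (hdiff : ∀ k, Differentiable ℝ (Fk k))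
    (L σ Fstar e : ℝ) (hL : 0 < L) (hσ : 0 < σ) (hσ' : σ < d * L) (he : 0 ≤ e)
    (hquad : ∀ k, CoordQuadUB (Fk k) L l u)
    (hstar : ∀ k, Fstar = sInf {v : ℝ | ∃ ξ, InBox l u ξ ∧ v = Fk k ξ})
    (hatt : ∀ k, ∃ ξs, InBox l u ξs ∧ Fk k ξs = Fstar)
    (hPL : ∀ k, ProxPL (Fk k) L l u σ Fstar)
    (hvar : ∀ k : ℕ, 1 ≤ k → ∀ ξ, InBox l u ξ → |Fk k ξ - Fk (k - 1) ξ| ≤ e)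
    (ξ0 : Fin d → ℝ) (hξ0 : InBox l u ξ0)
    (Ξ : (k : ℕ) → (Fin k → Fin d) → (Fin d → ℝ))
    (hinit : ∀ ω : Fin 0 → Fin d, Ξ 0 ω = ξ0)
    (hstep : ∀ k : ℕ, ∀ ω : Fin (k + 1) → Fin d,
      IsProxStep (Fk k) L l u (Ξ k (fun j => ω j.castSucc)) (ω (Fin.last k)) (Ξ (k + 1) ω)) :
    Filter.limsup
        (fun k : ℕ => (1 / (d : ℝ) ^ k) * ∑ ω : Fin k → Fin d, (Fk k (Ξ k ω) - Fstar))
        Filter.atTop ≤ e * (d * L) / σ :=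
  stmt9_general hd l u Fk hdiff L σ Fstar e hL hσ hσ' hquad hstar hPL hvar ξ0 hξ0 Ξ hinit hstep
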